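/- Let R be a commutative ring and A ∈ R^{m×n}, with φ : R^n → R^m the linear map x ↦ A·x. The following are equivalent: (a) the range of φ is a direct summand of R^m; (b) the quotient module R^m / (range φ) is a projective R-module; (e) there exists B ∈ R^{n×m} with A·B·A = A; (f) there exists B ∈ R^{n×m} with A·B·A = A and B·A·B = B; (g) for every k, the determinantal ideal D_k(A) is idempotent, i.e. D_k(A)·D_k(A) = D_k(A). -/

import Mathlib

/-!
An inner inverse `B` (`A * B * A = A`) makes `A * B` an idempotent with the same range as `A`, so
its kernel complements that range; conversely, as `R^m` is projective, the projection onto a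
complemented range lifts through `A` to an inner inverse. Complements of a submodule `p ≤ M` are
the same as splittings of `M → M ⧸ p`, which exist when `M ⧸ p` is projective.

By Cauchy–Binet `D_k(X * Y) ≤ D_k(X) * D_k(Y)`, so `A = A * B * A` forces `D_k(A) ≤ D_k(A)²`.
Conversely, the finitely generated idempotent ideal `D_k(A)` contains an element `e_k` acting as
the identity on it; since `D_{k+1}(A) ≤ D_k(A)`, the differences `e_k - e_{k+1}` are idempotents
summing to `1`, and `e_k - e_{k+1}` kills `D_{k+1}(A)`. For a `k × k` minor `M = A[α, β]`, the
adjugate of `M` padded by zeros is a matrix `B` with `A * B * A ≡ det M • A` modulo `D_{k+1}(A)`,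
the error entries being bordered `(k + 1)`-minors. Weighting such matrices by `e_k - e_{k+1}` and
summing over `k` gives an inner inverse.
-/

open Matrix

/-- The `k`-th determinantal ideal of a matrix. -/
noncomputable def detIdeal {R : Type*} [CommRing R] {m n : ℕ} (k : ℕ)
    (A : Matrix (Fin m) (Fin n) R) : Ideal R :=
  Ideal.span {x | ∃ (α : Fin k → Fin m) (β : Fin k → Fin n),
    StrictMono α ∧ StrictMono β ∧ x = (A.submatrix α β).det}

open Finset

namespace Tuple

variable {α : Type*} [LinearOrder α] {k : ℕ}

theorem strictMono_comp_sort {f : Fin k → α} (hf : Function.Injective f) :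
    StrictMono (f ∘ sort f) :=
  (monotone_sort f).strictMono_of_injective (hf.comp (sort f).injective)

theorem sort_comp_perm_of_strictMono {g : Fin k → α} (hg : StrictMono g)
    (σ : Equiv.Perm (Fin k)) : sort (g ∘ σ) = σ⁻¹ := by
  refine (eq_sort_iff.2 ⟨?_, fun i j hij h => ?_⟩).symm
  · simpa [Function.comp_def] using hg.monotone
  · exact absurd (hg.injective (by simpa using h)) hij.ne

end Tuple

namespace Matrix

variable {R : Type*} [CommRing R] {k l : ℕ}

theorem det_mul_eq_sum_prod_mul_det {ι κ : Type*} [Fintype ι] [DecidableEq ι] [Fintype κ]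
    [DecidableEq κ] (X : Matrix κ ι R) (Y : Matrix ι κ R) :
    (X * Y).det = ∑ f : κ → ι, (∏ i, X i (f i)) * (Y.submatrix f id).det := by
  have : (X * Y).det = (detRowAlternating : (κ → R) [⋀^κ]→ₗ[R] R).toMultilinearMap
      (fun i => ∑ t, X i t • Y t) := by
    show (X * Y).det = (of fun i => ∑ t, X i t • Y t).det
    congr 1
    ext i j
    simp [mul_apply, Finset.sum_apply]
  rw [this, MultilinearMap.map_sum]
  refine Finset.sum_congr rfl fun f _ => ?_
  rw [MultilinearMap.map_smul_univ]
  rfl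

open Classical in
theorem det_mul_eq_sum_strictMono (X : Matrix (Fin k) (Fin l) R)
    (Y : Matrix (Fin l) (Fin k) R) :
    (X * Y).det = ∑ g : Fin k → Fin l with StrictMono g,
      (X.submatrix id g).det * (Y.submatrix g id).det := by
  set T : (Fin k → Fin l) → R := fun f => (∏ i, X i (f i)) * (Y.submatrix f id).det
  set S := ({g | StrictMono g} : Finset (Fin k → Fin l)) ×ˢ (univ : Finset (Equiv.Perm (Fin k)))
  have hperm (g : Fin k → Fin l) : ∑ σ : Equiv.Perm (Fin k), T (g ∘ σ) =
      (X.submatrix id g).det * (Y.submatrix g id).det := by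
    rw [← det_transpose, det_apply', Finset.sum_mul]
    refine Finset.sum_congr rfl fun σ _ => ?_
    simp only [T]
    rw [show Y.submatrix (g ∘ σ) id = (Y.submatrix g id).submatrix σ id from rfl, det_permute]
    simp only [transpose_apply, submatrix_apply, id, Function.comp_apply]
    ring
  -- `f ↦ (f ∘ sort f, (sort f)⁻¹)` identifies injective `f` with the pairs in `S`; the other `f`
  -- repeat a row of `Y.submatrix f id` and contribute `0`.
  have hinj : Set.InjOn (fun p : (Fin k → Fin l) × Equiv.Perm (Fin k) => p.1 ∘ p.2) S := by
    rintro ⟨g, σ⟩ hg ⟨g', σ'⟩ hg' h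
    simp only [coe_product, coe_filter, mem_univ, true_and, coe_univ, Set.mem_prod,
      Set.mem_ofPred_eq, Set.mem_univ, and_true, S] at hg hg' h
    have hσ : σ = σ' := inv_injective <| by
      rw [← Tuple.sort_comp_perm_of_strictMono hg, ← Tuple.sort_comp_perm_of_strictMono hg', h]
    subst hσ
    simp only [Prod.mk.injEq, and_true]
    exact funext fun i => by simpa using congr_fun h (σ⁻¹ i)
  rw [det_mul_eq_sum_prod_mul_det, ← Finset.sum_subset (subset_univ (S.image _)), sum_image hinj,
    sum_product]
  · exact Finset.sum_congr rfl fun g _ => hperm g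
  · intro f _ hf
    have : ¬ Function.Injective f := fun hf' => hf <| mem_image.2
      ⟨(f ∘ Tuple.sort f, (Tuple.sort f)⁻¹),
        by simpa [S] using Tuple.strictMono_comp_sort hf', by ext; simp⟩
    obtain ⟨a, b, hab, hne⟩ := Function.not_injective_iff.1 this
    have h0 : (Y.submatrix f id).det = 0 := det_zero_of_row_eq hne (funext fun j => by simp [hab])
    simp only [h0, mul_zero]

theorem det_succ_eq_sub_dotProduct_adjugate_mulVec
    (N : Matrix (Fin (k + 1)) (Fin (k + 1)) R) :
    N.det = N 0 0 * (N.submatrix Fin.succ Fin.succ).det - (fun t => N 0 t.succ) ⬝ᵥ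
      ((N.submatrix Fin.succ Fin.succ).adjugate *ᵥ fun s => N s.succ 0) := by
  set M := N.submatrix Fin.succ Fin.succ
  have hminor (t : Fin k) : (M.updateCol t fun s => N s.succ 0).det =
      (-1) ^ (t : ℕ) * (N.submatrix Fin.succ t.succ.succAbove).det := by
    have : M.updateCol t (fun s => N s.succ 0) =
        (N.submatrix Fin.succ t.succ.succAbove).submatrix id t.cycleRange := by
      ext s u
      rw [submatrix_apply, submatrix_apply, id_eq, Fin.succAbove_cycleRange]
      by_cases hu : u = t
      · subst hu
        rw [Equiv.swap_apply_right, updateCol_self]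
      · rw [Equiv.swap_apply_of_ne_of_ne (Fin.succ_ne_zero u) (by simpa using hu),
          updateCol_ne hu]
        rfl
    rw [this, det_permute', Fin.sign_cycleRange]
    push_cast
    ring
  rw [det_succ_row_zero, Fin.sum_univ_succ, dotProduct, ← cramer_eq_adjugate_mulVec]
  simp only [cramer_apply, hminor, Fin.val_zero, pow_zero, one_mul, Fin.succAbove_zero,
    Fin.val_succ, pow_succ, sub_eq_add_neg, ← Finset.sum_neg_distrib]
  congr 1
  exact Finset.sum_congr rfl fun t _ => by ring

theorem det_submatrix_cons_cons {ι κ : Type*} [Fintype ι] [Fintype κ]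
    (A : Matrix ι κ R) (α : Fin k → ι) (β : Fin k → κ) (i : ι) (j : κ) :
    (A.submatrix (Fin.cons i α) (Fin.cons j β)).det = A i j * (A.submatrix α β).det -
      (A.submatrix id β * (A.submatrix α β).adjugate * A.submatrix α id) i j := by
  rw [det_succ_eq_sub_dotProduct_adjugate_mulVec, Matrix.mul_assoc]
  simp [mul_apply, mulVec, dotProduct]

end Matrix

theorem Ideal.exists_sum_eq_one_of_antitone {R : Type*} [CommRing R] {I : ℕ → Ideal R}
    (hI : Antitone I) (hfg : ∀ k, (I k).FG) (hidem : ∀ k, IsIdempotentElem (I k))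
    (h0 : I 0 = ⊤) {N : ℕ} (hN : I N = ⊥) :
    ∃ f : ℕ → R, ∑ k ∈ Finset.range N, f k = 1 ∧
      ∀ k, f k ∈ I k ∧ IsIdempotentElem (f k) ∧ ∀ x ∈ I (k + 1), f k * x = 0 := by
  choose e he hunit using fun k =>
    Submodule.exists_mem_and_smul_eq_self_of_fg_of_le_smul (I k) (I k) (hfg k) (hidem k).ge
  simp only [smul_eq_mul] at hunit
  have hsucc {k : ℕ} {x : R} (hx : x ∈ I (k + 1)) : e k * x = x := hunit k x (hI k.le_succ hx)
  have hee (k : ℕ) : e k * e k = e k := hunit k _ (he k)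
  refine ⟨fun k => e k - e (k + 1), ?_, fun k => ⟨?_, ?_, fun x hx => ?_⟩⟩
  · have h1 : e 0 = 1 := by simpa using hunit 0 1 (h0 ▸ Submodule.mem_top)
    have h2 : e N = 0 := by simpa [hN] using he N
    rw [Finset.sum_range_sub', h1, h2, sub_zero]
  · exact sub_mem (he k) (hI k.le_succ (he (k + 1)))
  · show (e k - e (k + 1)) * (e k - e (k + 1)) = e k - e (k + 1)
    linear_combination hee k + hee (k + 1) - 2 * hsucc (he (k + 1))
  · linear_combination hsucc hx - hunit (k + 1) x hx

section Complement

variable {R M N : Type*} [Ring R] [AddCommGroup M] [Module R M] [AddCommGroup N] [Module R N]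

open LinearMap

theorem LinearMap.isCompl_range_ker_comp_of_comp_comp_eq {f : N →ₗ[R] M} {g : M →ₗ[R] N}
    (h : f ∘ₗ g ∘ₗ f = f) : IsCompl (range f) (ker (f ∘ₗ g)) := by
  have hidem : IsIdempotentElem (f ∘ₗ g) := LinearMap.ext fun x => LinearMap.congr_fun h (g x)
  have hrange : range (f ∘ₗ g) = range f := by
    refine le_antisymm (range_comp_le_range g f) ?_
    calc range f = range ((f ∘ₗ g) ∘ₗ f) := by rw [comp_assoc, h]
      _ ≤ range (f ∘ₗ g) := range_comp_le_range _ _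
  exact hrange ▸ hidem.isCompl

theorem LinearMap.exists_comp_comp_eq_of_isCompl [Module.Projective R M] {f : N →ₗ[R] M}
    {q : Submodule R M} (h : IsCompl (range f) q) : ∃ g : M →ₗ[R] N, f ∘ₗ g ∘ₗ f = f := by
  obtain ⟨g, hg⟩ := Module.projective_lifting_property f.rangeRestrict
    ((range f).projectionOnto q h) f.surjective_rangeRestrict
  refine ⟨g, LinearMap.ext fun x => ?_⟩
  have := congr_arg Subtype.val (LinearMap.congr_fun hg (f x))
  simpa [Submodule.projectionOnto_apply_left h ⟨f x, mem_range_self f x⟩] using this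

theorem Submodule.projective_quotient_iff_exists_isCompl [Module.Projective R M]
    (p : Submodule R M) : Module.Projective R (M ⧸ p) ↔ ∃ q, IsCompl p q := by
  refine ⟨fun _ => ?_, fun ⟨q, h⟩ => ?_⟩
  · obtain ⟨s, hs⟩ := p.mkQ.exists_rightInverse_of_surjective p.range_mkQ
    have hidem : IsIdempotentElem (s ∘ₗ p.mkQ) := by
      rw [IsIdempotentElem, Module.End.mul_eq_comp, comp_assoc, ← comp_assoc p.mkQ, hs, id_comp]
    have hker : ker (s ∘ₗ p.mkQ) = p := by
      rw [ker_comp_of_ker_eq_bot _ (ker_eq_bot_of_inverse hs), ker_mkQ]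
    exact ⟨_, hker ▸ hidem.isCompl.symm⟩
  · exact .of_split (q.subtype ∘ₗ (p.quotientEquivOfIsCompl q h).toLinearMap) p.mkQ
      (LinearMap.ext fun x => p.mk_quotientEquivOfIsCompl_apply h x)

end Complement

theorem Matrix.exists_mul_mul_eq_self_iff {R : Type*} [CommRing R] {ι κ : Type*} [Fintype ι]
    [Fintype κ] [DecidableEq ι] [DecidableEq κ] (A : Matrix ι κ R) :
    (∃ B : Matrix κ ι R, A * B * A = A) ↔ ∃ q, IsCompl (LinearMap.range A.mulVecLin) q := by
  refine ⟨fun ⟨B, hB⟩ => ⟨_, LinearMap.isCompl_range_ker_comp_of_comp_comp_eq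
    (g := B.mulVecLin) ?_⟩, fun ⟨q, h⟩ => ?_⟩
  · rw [← mulVecLin_mul, ← mulVecLin_mul, ← Matrix.mul_assoc, hB]
  · obtain ⟨g, hg⟩ := LinearMap.exists_comp_comp_eq_of_isCompl h
    refine ⟨LinearMap.toMatrix' g, Matrix.toLin'.injective ?_⟩
    rw [toLin'_mul, toLin'_mul, toLin'_toMatrix', toLin'_apply', LinearMap.comp_assoc, hg]

theorem Matrix.exists_mul_mul_eq_and_mul_mul_eq {R : Type*} [Semiring R] {ι κ : Type*}
    [Fintype ι] [Fintype κ] {A : Matrix ι κ R} {B : Matrix κ ι R} (hB : A * B * A = A) :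
    ∃ C : Matrix κ ι R, A * C * A = A ∧ C * A * C = C := by
  refine ⟨B * A * B, ?_, ?_⟩
  · rw [← Matrix.mul_assoc, ← Matrix.mul_assoc, hB, hB]
  · calc B * A * B * A * (B * A * B) = B * (A * B * A) * (B * A * B) := by
          simp only [Matrix.mul_assoc]
      _ = B * A * (B * A * B) := by rw [hB]
      _ = B * (A * B * A) * B := by simp only [Matrix.mul_assoc]
      _ = B * A * B := by rw [hB]

section detIdeal

variable {R : Type*} [CommRing R] {m n : ℕ}

theorem detIdeal_fg (k : ℕ) (A : Matrix (Fin m) (Fin n) R) : (detIdeal k A).FG :=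
  Submodule.fg_span <| (Set.finite_range fun p : (Fin k → Fin m) × (Fin k → Fin n) =>
    (A.submatrix p.1 p.2).det).subset <| by rintro _ ⟨α, β, -, -, rfl⟩; exact ⟨(α, β), rfl⟩

theorem detIdeal_zero (A : Matrix (Fin m) (Fin n) R) : detIdeal 0 A = ⊤ :=
  (Ideal.eq_top_iff_one _).2 <| Ideal.subset_span
    ⟨Fin.elim0, Fin.elim0, fun a => a.elim0, fun a => a.elim0, by simp⟩

theorem detIdeal_eq_bot_of_lt {k : ℕ} (hk : m < k) (A : Matrix (Fin m) (Fin n) R) :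
    detIdeal k A = ⊥ := by
  rw [detIdeal, Ideal.span_eq_bot]
  rintro _ ⟨α, -, hα, -, rfl⟩
  have := Fintype.card_le_of_injective α hα.injective
  simp only [Fintype.card_fin] at this
  omega

theorem det_submatrix_mem_detIdeal {k : ℕ} (A : Matrix (Fin m) (Fin n) R)
    (ρ : Fin k → Fin m) (σ : Fin k → Fin n) : (A.submatrix ρ σ).det ∈ detIdeal k A := by
  by_cases hρ : Function.Injective ρ; swap
  · obtain ⟨a, b, hab, hne⟩ := Function.not_injective_iff.1 hρ
    rw [det_zero_of_row_eq hne (funext fun j => by simp [hab])]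
    exact zero_mem _
  by_cases hσ : Function.Injective σ; swap
  · obtain ⟨a, b, hab, hne⟩ := Function.not_injective_iff.1 hσ
    rw [det_zero_of_column_eq hne fun i => by simp [hab]]
    exact zero_mem _
  have : A.submatrix ρ σ = ((A.submatrix (ρ ∘ Tuple.sort ρ) (σ ∘ Tuple.sort σ)).submatrix
      ⇑(Tuple.sort ρ)⁻¹ id).submatrix id ⇑(Tuple.sort σ)⁻¹ := by
    ext; simp
  rw [this, det_permute', det_permute]
  exact Ideal.mul_mem_left _ _ <| Ideal.mul_mem_left _ _ <| Ideal.subset_span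
    ⟨_, _, Tuple.strictMono_comp_sort hρ, Tuple.strictMono_comp_sort hσ, rfl⟩

theorem detIdeal_succ_le (k : ℕ) (A : Matrix (Fin m) (Fin n) R) :
    detIdeal (k + 1) A ≤ detIdeal k A := by
  rw [detIdeal, Ideal.span_le]
  rintro _ ⟨α, β, -, -, rfl⟩
  rw [det_succ_row_zero]
  exact sum_mem fun j _ => Ideal.mul_mem_left _ _ <| by
    simpa using det_submatrix_mem_detIdeal A (α ∘ Fin.succ) (β ∘ j.succAbove)

theorem antitone_detIdeal (A : Matrix (Fin m) (Fin n) R) : Antitone (detIdeal · A) :=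
  antitone_nat_of_succ_le fun k => detIdeal_succ_le k A

theorem detIdeal_mul_le {l : ℕ} (k : ℕ) (X : Matrix (Fin m) (Fin l) R)
    (Y : Matrix (Fin l) (Fin n) R) : detIdeal k (X * Y) ≤ detIdeal k X * detIdeal k Y := by
  rw [detIdeal, Ideal.span_le]
  rintro _ ⟨α, β, -, -, rfl⟩
  rw [submatrix_mul X Y α id β Function.bijective_id, det_mul_eq_sum_strictMono]
  exact sum_mem fun g _ => Ideal.mul_mem_mul
    (by simpa using det_submatrix_mem_detIdeal X α g)
    (by simpa using det_submatrix_mem_detIdeal Y g β)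

theorem detIdeal_mul_self_of_mul_mul_eq {A : Matrix (Fin m) (Fin n) R}
    {B : Matrix (Fin n) (Fin m) R} (hB : A * B * A = A) (k : ℕ) :
    detIdeal k A * detIdeal k A = detIdeal k A := by
  refine le_antisymm Ideal.mul_le_left ?_
  calc detIdeal k A = detIdeal k (A * B * A) := by rw [hB]
    _ ≤ detIdeal k (A * B) * detIdeal k A := detIdeal_mul_le k _ _
    _ ≤ detIdeal k A * detIdeal k A :=
      Ideal.mul_mono_left <| (detIdeal_mul_le k A B).trans Ideal.mul_le_left

theorem exists_mul_mul_sub_mem_detIdeal_succ {k : ℕ} {A : Matrix (Fin m) (Fin n) R} {f : R}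
    (hf : f ∈ detIdeal k A) :
    ∃ B : Matrix (Fin n) (Fin m) R, ∀ i j, (A * B * A) i j - f * A i j ∈ detIdeal (k + 1) A := by
  induction hf using Submodule.span_induction with
  | mem x hx =>
    obtain ⟨α, β, -, -, rfl⟩ := hx
    set P := (1 : Matrix (Fin n) (Fin n) R).submatrix id β
    set Q := (1 : Matrix (Fin m) (Fin m) R).submatrix α id
    have hAP : A * P = A.submatrix id β := by simpa using mul_submatrix_one (Equiv.refl _) β A
    have hQA : Q * A = A.submatrix α id := by simpa using one_submatrix_mul α (Equiv.refl _) A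
    refine ⟨P * (A.submatrix α β).adjugate * Q, fun i j => ?_⟩
    rw [← neg_mem_iff]
    convert det_submatrix_mem_detIdeal A (Fin.cons i α) (Fin.cons j β) using 1
    rw [det_submatrix_cons_cons, ← hAP, ← hQA]
    simp only [Matrix.mul_assoc]
    ring
  | zero => exact ⟨0, fun i j => by simp⟩
  | add x y _ _ hx hy =>
    obtain ⟨Bx, hBx⟩ := hx
    obtain ⟨By, hBy⟩ := hy
    refine ⟨Bx + By, fun i j => ?_⟩
    convert add_mem (hBx i j) (hBy i j) using 1
    simp only [Matrix.mul_add, Matrix.add_mul, Matrix.add_apply]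
    ring
  | smul r x _ hx =>
    obtain ⟨B, hB⟩ := hx
    refine ⟨r • B, fun i j => ?_⟩
    convert Ideal.mul_mem_left _ r (hB i j) using 1
    simp only [Matrix.mul_smul, Matrix.smul_mul, Matrix.smul_apply, smul_eq_mul]
    ring

theorem exists_mul_mul_eq_smul {k : ℕ} {A : Matrix (Fin m) (Fin n) R} {f : R}
    (hf : f ∈ detIdeal k A) (hff : IsIdempotentElem f)
    (hann : ∀ x ∈ detIdeal (k + 1) A, f * x = 0) :
    ∃ B : Matrix (Fin n) (Fin m) R, A * B * A = f • A := by
  obtain ⟨B, hB⟩ := exists_mul_mul_sub_mem_detIdeal_succ hf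
  refine ⟨f • B, ext fun i j => ?_⟩
  have := hann _ (hB i j)
  simp only [Matrix.mul_smul, Matrix.smul_mul, Matrix.smul_apply, smul_eq_mul] at this ⊢
  linear_combination this + A i j * hff.eq

theorem exists_mul_mul_eq_of_detIdeal_mul_self {A : Matrix (Fin m) (Fin n) R}
    (h : ∀ k, detIdeal k A * detIdeal k A = detIdeal k A) :
    ∃ B : Matrix (Fin n) (Fin m) R, A * B * A = A := by
  obtain ⟨f, hsum, hf⟩ := Ideal.exists_sum_eq_one_of_antitone (antitone_detIdeal A)
    (detIdeal_fg · A) h (detIdeal_zero A) (detIdeal_eq_bot_of_lt m.lt_succ_self A)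
  choose B hB using fun k => exists_mul_mul_eq_smul (hf k).1 (hf k).2.1 (hf k).2.2
  refine ⟨∑ k ∈ Finset.range (m + 1), B k, ?_⟩
  rw [Matrix.mul_sum, Matrix.sum_mul, Finset.sum_congr rfl fun k _ => hB k, ← Finset.sum_smul,
    hsum, one_smul]

end detIdeal

theorem stmt18 {R : Type*} [CommRing R] {m n : ℕ} (A : Matrix (Fin m) (Fin n) R) :
    List.TFAE
      [ ∃ q : Submodule R (Fin m → R), IsCompl (LinearMap.range A.mulVecLin) q,
        Module.Projective R ((Fin m → R) ⧸ LinearMap.range A.mulVecLin),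
        ∃ B : Matrix (Fin n) (Fin m) R, A * B * A = A,
        ∃ B : Matrix (Fin n) (Fin m) R, A * B * A = A ∧ B * A * B = B,
        ∀ k : ℕ, detIdeal k A * detIdeal k A = detIdeal k A ] := by
  tfae_have 1 ↔ 2 := (Submodule.projective_quotient_iff_exists_isCompl _).symm
  tfae_have 3 ↔ 1 := A.exists_mul_mul_eq_self_iff
  tfae_have 3 → 4 := fun ⟨B, hB⟩ => Matrix.exists_mul_mul_eq_and_mul_mul_eq hB
  tfae_have 4 → 3 := fun ⟨B, hB, _⟩ => ⟨B, hB⟩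
  tfae_have 3 → 5 := fun ⟨B, hB⟩ => detIdeal_mul_self_of_mul_mul_eq hB
  tfae_have 5 → 3 := exists_mul_mul_eq_of_detIdeal_mul_self
  tfae_finish
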